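/- arXiv:0910.0267 — 4 statements merged into one kernel-verified Lean document; each statement's English description precedes it below -/
import Mathlib

section
/- Let G = A ∗_C B be a nontrivial amalgamated free product (A ≠ C and B ≠ C) and let N be a normal subgroup of G. If the subgroup NC generated by N and C has finite index in G, then N is not contained in C. -/
/-!
If `N ≤ C` then `N ⊔ C = C`, so it suffices that `C` has infinite index in `A ∗_C B`. Pick
`a ∈ A \ C` and `b ∈ B \ C`. For `n ≥ 1` the alternating word `abab⋯ab` is reduced, so by the
normal form theorem `(ab)ⁿ ∉ C`; but a subgroup of finite index contains a positive power of
every element.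
-/

open Monoid

namespace Monoid.CoprodI

variable {ι : Type*} {M : ι → Type*}

def alternatingList (x y : Σ i, M i) : ℕ → List (Σ i, M i)
  | 0 => []
  | n + 1 => x :: y :: alternatingList x y n

variable {x y : Σ i, M i}

theorem mem_alternatingList {z : Σ i, M i} : ∀ {n}, z ∈ alternatingList x y n → z = x ∨ z = y
  | n + 1, hz => by
    simp only [alternatingList, List.mem_cons] at hz
    rcases hz with rfl | rfl | hz
    exacts [.inl rfl, .inr rfl, mem_alternatingList hz]

theorem isChain_alternatingList (hxy : x.1 ≠ y.1) : ∀ n,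
    (alternatingList x y n).IsChain (fun l l' => l.1 ≠ l'.1) ∧
      (y :: alternatingList x y n).IsChain (fun l l' => l.1 ≠ l'.1)
  | 0 => by simp [alternatingList]
  | n + 1 => by
    obtain ⟨h, h'⟩ := isChain_alternatingList hxy n
    simp only [alternatingList, List.isChain_cons_cons] at h' ⊢
    exact ⟨⟨hxy, h'⟩, hxy.symm, hxy, h'⟩

variable [∀ i, Monoid (M i)]

def Word.alternating (hxy : x.1 ≠ y.1) (hx : x.2 ≠ 1) (hy : y.2 ≠ 1) (n : ℕ) : Word M where
  toList := alternatingList x y n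
  ne_one _ hz := by rcases mem_alternatingList hz with rfl | rfl <;> assumption
  chain_ne := (isChain_alternatingList hxy n).1

theorem Word.alternating_prod (hxy : x.1 ≠ y.1) (hx : x.2 ≠ 1) (hy : y.2 ≠ 1) (n : ℕ) :
    (Word.alternating hxy hx hy n).prod = (of x.2 * of y.2) ^ n := by
  induction n with
  | zero => rfl
  | succ n ih =>
    rw [pow_succ', ← ih]
    simp [Word.prod, Word.alternating, alternatingList, mul_assoc]

end Monoid.CoprodI

namespace Monoid.PushoutI

open CoprodI

variable {ι : Type*} {G : ι → Type*} {H : Type*} [∀ i, Group (G i)] [Group H]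
  {φ : ∀ i, H →* G i}

theorem base_range_le_of_range (i : ι) : (base φ).range ≤ (of i).range := by
  rw [← of_comp_eq_base i, MonoidHom.range_comp]
  exact Subgroup.map_le_range _ _

theorem exists_notMem_range_of_range_ne {i : ι} (h : (of (φ := φ) i).range ≠ (base φ).range) :
    ∃ g : G i, g ∉ (φ i).range := by
  by_contra! hall
  refine h (le_antisymm ?_ (base_range_le_of_range i))
  rintro _ ⟨g, rfl⟩
  obtain ⟨h, rfl⟩ := hall g
  exact ⟨h, (of_apply_eq_base φ i h).symm⟩

theorem pow_of_mul_of_notMem_base_range (hφ : ∀ i, Function.Injective (φ i)) {i j : ι}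
    (hij : i ≠ j) {a : G i} {b : G j} (ha : a ∉ (φ i).range) (hb : b ∉ (φ j).range) {n : ℕ}
    (hn : n ≠ 0) : (of i a * of j b) ^ n ∉ (base φ).range := by
  intro hmem
  let w := Word.alternating (x := ⟨i, a⟩) (y := ⟨j, b⟩) hij
    (ne_of_mem_of_not_mem (one_mem _) ha).symm (ne_of_mem_of_not_mem (one_mem _) hb).symm n
  have hred : Reduced φ w := fun z hz => by
    rcases mem_alternatingList hz with rfl | rfl <;> assumption
  have hw : ofCoprodI w.prod ∈ (base φ).range := by
    simpa [w, Word.alternating_prod, ofCoprodI_of] using hmem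
  obtain ⟨n, rfl⟩ := Nat.exists_eq_succ_of_ne_zero hn
  simpa [w, Word.alternating, alternatingList] using
    congrArg Word.toList (hred.eq_empty_of_mem_range hφ hw)

theorem not_finiteIndex_base_range (hφ : ∀ i, Function.Injective (φ i)) {i j : ι}
    (hij : i ≠ j) {a : G i} {b : G j} (ha : a ∉ (φ i).range) (hb : b ∉ (φ j).range) :
    ¬ (base φ).range.FiniteIndex := fun hfin => by
  obtain ⟨n, hn, -, hmem⟩ :=
    Subgroup.exists_pow_mem_of_index_ne_zero hfin.index_ne_zero (of i a * of j b)
  exact pow_of_mul_of_notMem_base_range hφ hij ha hb hn.ne' hmem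

end Monoid.PushoutI

theorem stmt_2_general {H : Type*} [Group H] {K : Bool → Type*} [∀ i, Group (K i)]
    (φ : ∀ i, H →* K i) (hφ : ∀ i, Function.Injective (φ i))
    (A B C N : Subgroup (PushoutI φ))
    (hA : A = (PushoutI.of (φ := φ) true).range)
    (hB : B = (PushoutI.of (φ := φ) false).range)
    (hC : C = (PushoutI.base φ).range)
    (hAC : A ≠ C) (hBC : B ≠ C)
    (hNCidx : (N ⊔ C).FiniteIndex) :
    ¬ N ≤ C := by
  intro hNC
  subst hA hB hC
  obtain ⟨a, ha⟩ := PushoutI.exists_notMem_range_of_range_ne hAC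
  obtain ⟨b, hb⟩ := PushoutI.exists_notMem_range_of_range_ne hBC
  rw [sup_eq_right.mpr hNC] at hNCidx
  exact PushoutI.not_finiteIndex_base_range hφ (by decide) ha hb hNCidx

/-- Let `G = A ∗_C B` be a nontrivial amalgamated free product and `N` a normal
subgroup of `G`.  If the subgroup `N ⊔ C` generated by `N` and `C` has finite index in `G`, then
`N` is not contained in `C`. -/
theorem stmt_2 {H : Type*} [Group H] {K : Bool → Type*} [∀ i, Group (K i)]
    (φ : ∀ i, H →* K i) (hφ : ∀ i, Function.Injective (φ i))
    (A B C N : Subgroup (PushoutI φ))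
    (hA : A = (PushoutI.of (φ := φ) true).range)
    (hB : B = (PushoutI.of (φ := φ) false).range)
    (hC : C = (PushoutI.base φ).range)
    (hAC : A ≠ C) (hBC : B ≠ C)
    (hNnorm : N.Normal)
    (hNCidx : (N ⊔ C).FiniteIndex) :
    ¬ N ≤ C :=
  stmt_2_general φ hφ A B C N hA hB hC hAC hBC hNCidx
end

section
/- Let G = A ∗_C B be a nontrivial amalgamated free product (A ≠ C and B ≠ C) and let N be a normal subgroup of G. If the subgroup NC generated by N and C has finite index in G, and N ∩ A and N ∩ B are finitely generated, then N is finitely generated. -/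
/-!
Consider the coset graph whose vertices are the cosets `g A`, `g B` and whose edges are the cosets
`g C`, joining `g A` to `g B`. Since `A ⊔ B = ⊤` it is connected, and since `N ⊔ C` has finite
index, `N` has finitely many orbits of edges, hence of vertices. Fix a representative `r D`
(`D = A, B`) in each `N`-orbit of vertices, with representative `A` for the orbit of `A`, and let
`P ≤ N` be generated by the `r`-conjugates of the finitely many generators of `N ⊓ A` and `N ⊓ B`,
together with, for each representative edge `t C`, the element `mA⁻¹ * mB`, where `mA, mB ∈ N`
carry the representatives of the orbits of `t A` and `t B` to these vertices. Along every edge, `P`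
carries the representative to one endpoint iff it does so to the other, so by connectedness `P`
does so to every vertex. For the vertex `n A`, `n ∈ N`, this gives `n ∈ P`.
-/

open Monoid

namespace Subgroup

variable {G : Type*} [Group G]

theorem exists_section_map_one (M : Subgroup G) :
    ∃ r : G ⧸ M → G, (∀ q, (r q : G ⧸ M) = q) ∧ r (1 : G) = 1 := by
  classical
  refine ⟨fun q => if q = ((1 : G) : G ⧸ M) then 1 else q.out, fun q => ?_, if_pos rfl⟩
  dsimp only
  split_ifs with h
  · exact h.symm
  · exact QuotientGroup.out_eq' q

theorem mk_sup_eq_mk_iff {N D : Subgroup G} [N.Normal] {x y : G} :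
    (x : G ⧸ (N ⊔ D)) = y ↔ ∃ n ∈ N, ∃ d ∈ D, y = n * x * d := by
  rw [QuotientGroup.eq, mem_sup_of_normal_left]
  constructor
  · rintro ⟨n, hn, d, hd, h⟩
    refine ⟨x * n * x⁻¹, Normal.conj_mem ‹_› n hn x, d, hd, ?_⟩
    rw [inv_mul_cancel_right, mul_assoc, h, mul_inv_cancel_left]
  · rintro ⟨n, hn, d, hd, rfl⟩
    exact ⟨x⁻¹ * n * x⁻¹⁻¹, Normal.conj_mem ‹_› n hn x⁻¹, d, hd, by group⟩

theorem conj_mem_of_mem_closure {S : Set G} {P : Subgroup G} {g x : G}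
    (hS : ∀ s ∈ S, g * s * g⁻¹ ∈ P) (hx : x ∈ closure S) : g * x * g⁻¹ ∈ P :=
  (closure_le (P.comap (MulAut.conj g).toMonoidHom)).2 hS hx

theorem forall_of_sup_eq_top {A B : Subgroup G} (hAB : A ⊔ B = ⊤) {W : G → Prop} (h1 : W 1)
    (hA : ∀ g, ∀ a ∈ A, W g → W (g * a)) (hB : ∀ g, ∀ b ∈ B, W g → W (g * b)) (g : G) : W g := by
  have hg : g ∈ closure ((A : Set G) ∪ B) := by rw [← sup_eq_closure, hAB]; trivial
  induction hg using closure_induction_right with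
  | one => exact h1
  | mul_right x _ y hy ih =>
    rcases hy with hy | hy
    · exact hA x y hy ih
    · exact hB x y hy ih
  | mul_inv_cancel x _ y hy ih =>
    rcases hy with hy | hy
    · exact hA x y⁻¹ (inv_mem hy) ih
    · exact hB x y⁻¹ (inv_mem hy) ih

/-- In the coset graph, `P` carries the representative `r ⟦g⟧` of the `N`-orbit of the vertex
`g D` to `g D`. -/
def InRepOrbit (N D P : Subgroup G) (r : G ⧸ (N ⊔ D) → G) (g : G) : Prop :=
  ∃ p ∈ P, ∃ d ∈ D, g = p * r g * d

section InRepOrbit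

variable {N D P : Subgroup G} {r : G ⧸ (N ⊔ D) → G}

theorem inRepOrbit_mul_right {g d : G} (hd : d ∈ D) :
    InRepOrbit N D P r (g * d) ↔ InRepOrbit N D P r g := by
  rw [InRepOrbit, InRepOrbit, QuotientGroup.mk_mul_of_mem g (mem_sup_right hd)]
  constructor
  · rintro ⟨p, hp, d', hd', h⟩
    exact ⟨p, hp, d' * d⁻¹, mul_mem hd' (inv_mem hd), by rw [← mul_assoc, ← h]; group⟩
  · rintro ⟨p, hp, d', hd', h⟩
    exact ⟨p, hp, d' * d, mul_mem hd' hd, by rw [← mul_assoc, ← h]⟩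

theorem inRepOrbit_iff [N.Normal] (hPN : P ≤ N) (hr : ∀ q, (r q : G ⧸ (N ⊔ D)) = q)
    (hconj : ∀ q, ∀ x ∈ N ⊓ D, r q * x * (r q)⁻¹ ∈ P) {g k d : G} {q : G ⧸ (N ⊔ D)}
    (hk : k ∈ N) (hd : d ∈ D) (hg : g = k * r q * d) :
    InRepOrbit N D P r g ↔ k ∈ P := by
  have hgq : (g : G ⧸ (N ⊔ D)) = q := by
    rw [← hr q]; exact (mk_sup_eq_mk_iff.2 ⟨k, hk, d, hd, hg⟩).symm
  rw [InRepOrbit, hgq]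
  constructor
  · rintro ⟨p, hp, a, ha, hpa⟩
    have hconj_eq : p⁻¹ * k = r q * (a * d⁻¹) * (r q)⁻¹ := by
      calc p⁻¹ * k = p⁻¹ * (k * r q * d) * d⁻¹ * (r q)⁻¹ := by group
        _ = r q * (a * d⁻¹) * (r q)⁻¹ := by rw [← hg, hpa]; group
    have haN : a * d⁻¹ ∈ N := by
      have h := Normal.conj_mem ‹_› _ (mul_mem (inv_mem (hPN hp)) hk) (r q)⁻¹
      rwa [hconj_eq, show ∀ x : G, (r q)⁻¹ * (r q * x * (r q)⁻¹) * (r q)⁻¹⁻¹ = x by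
        intro x; group] at h
    have h := hconj q _ (mem_inf.2 ⟨haN, D.mul_mem ha (D.inv_mem hd)⟩)
    rwa [← hconj_eq, mul_mem_cancel_left (inv_mem hp)] at h
  · exact fun hkP => ⟨k, hkP, d, hd, hg⟩

theorem le_of_inRepOrbit_iff_inRepOrbit [N.Normal] {A B : Subgroup G} (hAB : A ⊔ B = ⊤)
    {rA : G ⧸ (N ⊔ A) → G} {rB : G ⧸ (N ⊔ B) → G} (hPN : P ≤ N)
    (hrA : ∀ q, (rA q : G ⧸ (N ⊔ A)) = q) (hrA1 : rA (1 : G) = 1)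
    (hconjA : ∀ q, ∀ x ∈ N ⊓ A, rA q * x * (rA q)⁻¹ ∈ P)
    (hAB_iff : ∀ g, InRepOrbit N A P rA g ↔ InRepOrbit N B P rB g) : N ≤ P := by
  have hreach : ∀ g, InRepOrbit N A P rA g :=
    forall_of_sup_eq_top hAB
      ((inRepOrbit_iff hPN hrA hconjA (one_mem N) (one_mem A) (by rw [hrA1]; group)).2
        (one_mem P))
      (fun g a ha hg => (inRepOrbit_mul_right ha).2 hg)
      (fun g b hb hg => (hAB_iff _).2 ((inRepOrbit_mul_right hb).2 ((hAB_iff g).1 hg)))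
  exact fun n hn =>
    (inRepOrbit_iff hPN hrA hconjA hn (one_mem A) (by rw [hrA1]; group)).1 (hreach n)

end InRepOrbit

theorem fg_of_finiteIndex_sup_of_fg_inf {A B C N : Subgroup G} (hCA : C ≤ A) (hCB : C ≤ B)
    (hAB : A ⊔ B = ⊤) [N.Normal] [(N ⊔ C).FiniteIndex] (hNA : (N ⊓ A).FG) (hNB : (N ⊓ B).FG) :
    N.FG := by
  have : (N ⊔ A).FiniteIndex := finiteIndex_of_le (sup_le_sup_left hCA N)
  have : (N ⊔ B).FiniteIndex := finiteIndex_of_le (sup_le_sup_left hCB N)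
  obtain ⟨rA, hrA, hrA1⟩ := exists_section_map_one (N ⊔ A)
  obtain ⟨rB, hrB, -⟩ := exists_section_map_one (N ⊔ B)
  obtain ⟨SA, hSA⟩ := hNA
  obtain ⟨SB, hSB⟩ := hNB
  choose mA hmA dA hdA hA using fun q : G ⧸ (N ⊔ C) => mk_sup_eq_mk_iff.1 (hrA q.out)
  choose mB hmB dB hdB hB using fun q : G ⧸ (N ⊔ C) => mk_sup_eq_mk_iff.1 (hrB q.out)
  set X : Set G := (⋃ q, (fun x => rA q * x * (rA q)⁻¹) '' SA) ∪
    (⋃ q, (fun x => rB q * x * (rB q)⁻¹) '' SB) ∪ Set.range fun q => (mA q)⁻¹ * mB q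
  set P := closure X
  have hXfin : X.Finite :=
    ((Set.finite_iUnion fun _ => SA.finite_toSet.image _).union
      (Set.finite_iUnion fun _ => SB.finite_toSet.image _)).union (Set.finite_range _)
  have hPN : P ≤ N := by
    refine (closure_le N).2 ?_
    rintro _ ((⟨_, ⟨q, rfl⟩, x, hx, rfl⟩ | ⟨_, ⟨q, rfl⟩, x, hx, rfl⟩) | ⟨q, rfl⟩)
    · exact Normal.conj_mem ‹_› x (mem_inf.1 (hSA ▸ subset_closure hx)).1 _
    · exact Normal.conj_mem ‹_› x (mem_inf.1 (hSB ▸ subset_closure hx)).1 _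
    · exact mul_mem (inv_mem (hmA q)) (hmB q)
  have hconjA : ∀ q, ∀ x ∈ N ⊓ A, rA q * x * (rA q)⁻¹ ∈ P := fun q x hx =>
    conj_mem_of_mem_closure (fun s hs => subset_closure (.inl (.inl ⟨_, ⟨q, rfl⟩, s, hs, rfl⟩)))
      (hSA ▸ hx)
  have hconjB : ∀ q, ∀ x ∈ N ⊓ B, rB q * x * (rB q)⁻¹ ∈ P := fun q x hx =>
    conj_mem_of_mem_closure (fun s hs => subset_closure (.inl (.inr ⟨_, ⟨q, rfl⟩, s, hs, rfl⟩)))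
      (hSB ▸ hx)
  have hAB_iff : ∀ g, InRepOrbit N A P rA g ↔ InRepOrbit N B P rB g := by
    intro g
    obtain ⟨n, hn, c, hc, hg⟩ := mk_sup_eq_mk_iff.1 (QuotientGroup.out_eq' (g : G ⧸ (N ⊔ C)))
    set q := (g : G ⧸ (N ⊔ C))
    have hgA : g = n * mA q * rA q.out * (dA q * c) := by
      conv_lhs => rw [hg, hA q]
      group
    have hgB : g = n * mB q * rB q.out * (dB q * c) := by
      conv_lhs => rw [hg, hB q]
      group
    rw [inRepOrbit_iff hPN hrA hconjA (mul_mem hn (hmA q)) (mul_mem (hdA q) (hCA hc)) hgA,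
      inRepOrbit_iff hPN hrB hconjB (mul_mem hn (hmB q)) (mul_mem (hdB q) (hCB hc)) hgB,
      ← mul_mem_cancel_right (subset_closure (.inr ⟨q, rfl⟩) : (mA q)⁻¹ * mB q ∈ P),
      mul_assoc, mul_inv_cancel_left]
  exact (fg_iff N).2 ⟨X, le_antisymm hPN
    (le_of_inRepOrbit_iff_inRepOrbit hAB hPN hrA hrA1 hconjA hAB_iff), hXfin⟩

end Subgroup

namespace Monoid.PushoutI

variable {ι H : Type*} {K : ι → Type*} [Group H] [∀ i, Group (K i)] {φ : ∀ i, H →* K i}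

theorem range_base_le_range_of (i : ι) : (base φ).range ≤ (of i : K i →* PushoutI φ).range := by
  rintro _ ⟨h, rfl⟩
  exact ⟨φ i h, of_apply_eq_base φ i h⟩

theorem iSup_range_of [Nonempty ι] : ⨆ i, (of i : K i →* PushoutI φ).range = ⊤ := by
  rw [eq_top_iff]
  rintro x -
  induction x using PushoutI.induction_on with
  | of i g => exact Subgroup.mem_iSup_of_mem i ⟨g, rfl⟩
  | base h =>
    exact Subgroup.mem_iSup_of_mem (Classical.arbitrary ι) (range_base_le_range_of _ ⟨h, rfl⟩)
  | mul x y hx hy => exact mul_mem hx hy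

end Monoid.PushoutI

theorem stmt_3_general {H : Type*} [Group H] {K : Bool → Type*} [∀ i, Group (K i)]
    (φ : ∀ i, H →* K i)
    (A B C N : Subgroup (PushoutI φ))
    (hA : A = (PushoutI.of (φ := φ) true).range)
    (hB : B = (PushoutI.of (φ := φ) false).range)
    (hC : C = (PushoutI.base φ).range)
    (hNnorm : N.Normal)
    (hNCidx : (N ⊔ C).FiniteIndex)
    (hNA : (N ⊓ A).FG) (hNB : (N ⊓ B).FG) :
    N.FG := by
  subst hA hB hC
  have := hNnorm
  have := hNCidx
  have hAB : (PushoutI.of (φ := φ) true).range ⊔ (PushoutI.of (φ := φ) false).range = ⊤ := by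
    simpa only [iSup_bool_eq] using PushoutI.iSup_range_of (φ := φ)
  exact Subgroup.fg_of_finiteIndex_sup_of_fg_inf (PushoutI.range_base_le_range_of _)
    (PushoutI.range_base_le_range_of _) hAB hNA hNB

/-- Let `G = A ∗_C B` be a nontrivial amalgamated free product and `N` a normal
subgroup of `G`.  If the subgroup `N ⊔ C` generated by `N` and `C` has finite index in `G`, and
`N ⊓ A` and `N ⊓ B` are finitely generated, then `N` is finitely generated. -/
theorem stmt_3 {H : Type*} [Group H] {K : Bool → Type*} [∀ i, Group (K i)]
    (φ : ∀ i, H →* K i) (hφ : ∀ i, Function.Injective (φ i))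
    (A B C N : Subgroup (PushoutI φ))
    (hA : A = (PushoutI.of (φ := φ) true).range)
    (hB : B = (PushoutI.of (φ := φ) false).range)
    (hC : C = (PushoutI.base φ).range)
    (hAC : A ≠ C) (hBC : B ≠ C)
    (hNnorm : N.Normal)
    (hNCidx : (N ⊔ C).FiniteIndex)
    (hNA : (N ⊓ A).FG) (hNB : (N ⊓ B).FG) :
    N.FG :=
  stmt_3_general φ A B C N hA hB hC hNnorm hNCidx hNA hNB
end

section
/- Let G = A∗_C be an HNN extension with base group A, associated subgroups C and D, and stable letter t, and let N be a normal subgroup of G. If the subgroup NC generated by N and C has finite index in G and N ∩ A is finitely generated, then N is finitely generated. -/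
/-!
The Bass–Serre tree of `G` has vertex set `G ⧸ A` and edge set `G ⧸ C`; since `N` is normal and
`N ⊔ C` has finite index, `N` acts on it with finitely many orbits of vertices and edges. Hence `N`
is generated by the stabilisers `v (N ⊓ A) v⁻¹` of finitely many orbit representatives `v`,
together with one element of `N` per edge orbit. Concretely, with `v` running through a transversal
of `N ⊔ A` and `H` the subgroup generated by these elements, the set `H * v(G ⧸ (N ⊔ A)) * A`
contains `1` and is stable under right multiplication by `A`, `t` and `t⁻¹`, so it is all of `G`;
intersecting with `N` gives `N = H`.
-/

open Subgroup Pointwise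

theorem QuotientGroup.exists_section_one_eq_one {G : Type*} [Group G] (K : Subgroup G) :
    ∃ v : G ⧸ K → G, (∀ q, (v q : G ⧸ K) = q) ∧ v (1 : G) = 1 := by
  classical
  refine ⟨Function.update Quotient.out ((1 : G) : G ⧸ K) 1, fun q => ?_, by simp⟩
  by_cases hq : q = ((1 : G) : G ⧸ K)
  · simp [hq]
  · simp [Function.update_of_ne hq]

theorem Subgroup.FG.map {G G' : Type*} [Group G] [Group G'] {P : Subgroup G} (hP : P.FG)
    (f : G →* G') : (P.map f).FG := by
  classical
  obtain ⟨S, rfl⟩ := hP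
  exact ⟨S.image f, by simp [MonoidHom.map_closure]⟩

theorem HNNExtension.closure_insert_t_range_eq_top {A : Type*} [Group A] {C D : Subgroup A}
    (φ : C ≃* D) :
    closure (insert t ((of : A →* HNNExtension A C D φ).range : Set (HNNExtension A C D φ))) =
      ⊤ := by
  refine (eq_top_iff' _).2 fun g => ?_
  induction g using HNNExtension.induction_on with
  | of a => exact subset_closure (Set.mem_insert_of_mem _ ⟨a, rfl⟩)
  | t => exact subset_closure (Set.mem_insert _ _)
  | mul x y hx hy => exact mul_mem hx hy
  | inv x hx => exact inv_mem hx

def mulRangeMul {G : Type*} [Group G] (H A : Subgroup G) {Q : Type*} (v : Q → G) : Set G :=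
  {g | ∃ h ∈ H, ∃ q, ∃ a ∈ A, g = h * v q * a}

theorem mul_mem_mulRangeMul {G : Type*} [Group G] {H A : Subgroup G} {Q : Type*} {v : Q → G}
    {h g a : G} (hh : h ∈ H) (hg : g ∈ mulRangeMul H A v) (ha : a ∈ A) :
    h * g * a ∈ mulRangeMul H A v := by
  obtain ⟨h', hh', q, a', ha', rfl⟩ := hg
  exact ⟨h * h', mul_mem hh hh', q, a' * a, mul_mem ha' ha, by group⟩

section TransversalDecomposition

variable {G : Type*} [Group G] {N A C H : Subgroup G} [hN : N.Normal]

theorem exists_eq_mul_section_mul (K : Subgroup G) {v : G ⧸ (N ⊔ K) → G}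
    (hv : ∀ q, (v q : G ⧸ (N ⊔ K)) = q) (g : G) : ∃ n ∈ N, ∃ k ∈ K, g = n * v g * k := by
  have hmem : (v g)⁻¹ * g ∈ (N : Set G) * (K : Set G) := by
    rw [← normal_mul, SetLike.mem_coe, ← QuotientGroup.eq, hv]
  obtain ⟨n, hn, k, hk, hnk⟩ := hmem
  refine ⟨v g * n * (v g)⁻¹, hN.conj_mem n hn _, k, hk, ?_⟩
  calc g = v g * ((v g)⁻¹ * g) := by group
    _ = v g * n * (v g)⁻¹ * v g * k := by rw [← hnk]; group

variable {v : G ⧸ (N ⊔ A) → G}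

/-- An element of `N` of the form `v q * x * (v q')⁻¹` with `x ∈ A` forces `q = q'`, so it lies
in the conjugate `v q (N ⊓ A) (v q)⁻¹`. -/
theorem section_mul_mul_inv_section_mem (hv : ∀ q, (v q : G ⧸ (N ⊔ A)) = q)
    (hH : ∀ q, ∀ x ∈ N ⊓ A, v q * x * (v q)⁻¹ ∈ H) {q q' : G ⧸ (N ⊔ A)} {x : G}
    (hx : x ∈ A) (hn : v q * x * (v q')⁻¹ ∈ N) : v q * x * (v q')⁻¹ ∈ H := by
  have hqq' : q = q' := by
    rw [← hv q, ← hv q', QuotientGroup.eq]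
    have hconj := hN.conj_mem _ (inv_mem hn) (v q)⁻¹
    have hmul := mul_mem (mem_sup_left hconj) (mem_sup_right hx : x ∈ N ⊔ A)
    convert hmul using 1
    group
  subst hqq'
  have hxN : x ∈ N := by
    convert hN.conj_mem _ hn (v q)⁻¹ using 1
    group
  exact hH q x ⟨hxN, hx⟩

theorem exists_mk_eq_section_mul (hv : ∀ q, (v q : G ⧸ (N ⊔ A)) = q) (r : G ⧸ (N ⊔ C)) :
    ∃ g : G, (g : G ⧸ (N ⊔ C)) = r ∧ ∃ q, ∃ a ∈ A, g = v q * a := by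
  induction r using QuotientGroup.induction_on with | H g => ?_
  obtain ⟨n, hn, a, ha, hg⟩ := exists_eq_mul_section_mul A hv g
  refine ⟨v g * a, ?_, _, a, ha, rfl⟩
  generalize v (g : G ⧸ (N ⊔ A)) = w at hg ⊢
  rw [QuotientGroup.eq, hg]
  convert mem_sup_left (hN.conj_mem n hn (w * a)⁻¹) using 1
  group

-- `e` picks representatives of the `N`-orbits of edges, each starting at some vertex `v q`.
variable {t : G} {e : G ⧸ (N ⊔ C) → G}

theorem section_mul_mul_inv_mem_mulRangeMul (hv : ∀ q, (v q : G ⧸ (N ⊔ A)) = q)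
    (hH : ∀ q, ∀ x ∈ N ⊓ A, v q * x * (v q)⁻¹ ∈ H) (hCA : C ≤ A)
    (hconj : ∀ c ∈ C, t * c * t⁻¹ ∈ A) (he : ∀ r, (e r : G ⧸ (N ⊔ C)) = r)
    (heA : ∀ r, ∃ q, ∃ a ∈ A, e r = v q * a) (het : ∀ r, e r * t⁻¹ ∈ mulRangeMul H A v)
    (q : G ⧸ (N ⊔ A)) {a : G} (ha : a ∈ A) : v q * a * t⁻¹ ∈ mulRangeMul H A v := by
  obtain ⟨n, hn, c, hc, hdec⟩ := exists_eq_mul_section_mul C he (v q * a)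
  obtain ⟨q', a', ha', he'⟩ := heA (v q * a : G)
  have het' := het (v q * a : G)
  generalize e _ = E at hdec he' het'
  have hnH : n ∈ H := by
    have hn_eq : n = v q * (a * c⁻¹ * a'⁻¹) * (v q')⁻¹ := by
      rw [show n = v q * a * c⁻¹ * E⁻¹ by rw [hdec]; group, he']
      group
    rw [hn_eq] at hn ⊢
    exact section_mul_mul_inv_section_mem hv hH
      (mul_mem (mul_mem ha (inv_mem (hCA hc))) (inv_mem ha')) hn
  have hmul := mul_mem_mulRangeMul hnH het' (hconj c hc)
  convert hmul using 1
  rw [hdec]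
  group

theorem section_mul_mul_mem_mulRangeMul (hv : ∀ q, (v q : G ⧸ (N ⊔ A)) = q)
    (hH : ∀ q, ∀ x ∈ N ⊓ A, v q * x * (v q)⁻¹ ∈ H) (hHN : H ≤ N) (hCA : C ≤ A)
    (hconj : ∀ c ∈ C, t * c * t⁻¹ ∈ A) (he : ∀ r, (e r : G ⧸ (N ⊔ C)) = r)
    (heA : ∀ r, ∃ q, ∃ a ∈ A, e r = v q * a) (het : ∀ r, e r * t⁻¹ ∈ mulRangeMul H A v)
    (q : G ⧸ (N ⊔ A)) {a : G} (ha : a ∈ A) : v q * a * t ∈ mulRangeMul H A v := by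
  obtain ⟨n, hn, c, hc, hdec⟩ := exists_eq_mul_section_mul C he (v q * a * t)
  obtain ⟨q', a', ha', he'⟩ := heA (v q * a * t : G)
  obtain ⟨h, hh, q'', a'', ha'', het'⟩ := het (v q * a * t : G)
  generalize e _ = E at hdec he' het'
  have hnh_eq : n * h = v q * (a * (t * c⁻¹ * t⁻¹) * a''⁻¹) * (v q'')⁻¹ := by
    rw [show n = v q * a * t * c⁻¹ * E⁻¹ by rw [hdec]; group,
      show h = E * t⁻¹ * (v q'' * a'')⁻¹ by rw [het']; group]
    group
  have hnh : n * h ∈ H := by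
    rw [hnh_eq]
    refine section_mul_mul_inv_section_mem hv hH
      (mul_mem (mul_mem ha (hconj _ (inv_mem hc))) (inv_mem ha'')) ?_
    rw [← hnh_eq]
    exact mul_mem hn (hHN hh)
  have hnH : n ∈ H := by simpa using mul_mem hnh (inv_mem hh)
  refine ⟨n, hnH, q', a' * c, mul_mem ha' (hCA hc), ?_⟩
  rw [hdec, he']
  group

theorem mulRangeMul_eq_univ (hv : ∀ q, (v q : G ⧸ (N ⊔ A)) = q) (hv1 : v (1 : G) = 1)
    (hH : ∀ q, ∀ x ∈ N ⊓ A, v q * x * (v q)⁻¹ ∈ H) (hHN : H ≤ N) (hCA : C ≤ A)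
    (hconj : ∀ c ∈ C, t * c * t⁻¹ ∈ A) (hgen : closure (insert t (A : Set G)) = ⊤)
    (he : ∀ r, (e r : G ⧸ (N ⊔ C)) = r) (heA : ∀ r, ∃ q, ∃ a ∈ A, e r = v q * a)
    (het : ∀ r, e r * t⁻¹ ∈ mulRangeMul H A v) : mulRangeMul H A v = Set.univ := by
  refine Set.eq_univ_of_forall fun g => ?_
  have hg : g ∈ closure (insert t (A : Set G)) := hgen ▸ mem_top g
  induction hg using closure_induction_right with
  | one => exact ⟨1, one_mem H, (1 : G), 1, one_mem A, by rw [hv1]; group⟩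
  | mul_right x _ y hy hx =>
    obtain ⟨h, hh, q, a, ha, rfl⟩ := hx
    rcases hy with rfl | hy
    · simpa [mul_assoc] using mul_mem_mulRangeMul hh
        (section_mul_mul_mem_mulRangeMul hv hH hHN hCA hconj he heA het q ha) (one_mem A)
    · exact ⟨h, hh, q, a * y, mul_mem ha hy, by group⟩
  | mul_inv_cancel x _ y hy hx =>
    obtain ⟨h, hh, q, a, ha, rfl⟩ := hx
    rcases hy with rfl | hy
    · simpa [mul_assoc] using mul_mem_mulRangeMul hh
        (section_mul_mul_inv_mem_mulRangeMul hv hH hCA hconj he heA het q ha) (one_mem A)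
    · exact ⟨h, hh, q, a * y⁻¹, mul_mem ha (inv_mem hy), by group⟩

theorem le_of_mulRangeMul_eq_univ (hv : ∀ q, (v q : G ⧸ (N ⊔ A)) = q) (hv1 : v (1 : G) = 1)
    (hH : ∀ q, ∀ x ∈ N ⊓ A, v q * x * (v q)⁻¹ ∈ H) (hHN : H ≤ N)
    (hW : mulRangeMul H A v = Set.univ) : N ≤ H := by
  intro n hn
  obtain ⟨h, hh, q, a, ha, rfl⟩ := hW ▸ Set.mem_univ n
  have hva : v q * a * (v (1 : G))⁻¹ ∈ N := by
    rw [hv1, inv_one, mul_one]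
    simpa [mul_assoc] using mul_mem (inv_mem (hHN hh)) hn
  have hvaH := section_mul_mul_inv_section_mem hv hH ha hva
  rw [hv1, inv_one, mul_one] at hvaH
  simpa [mul_assoc] using mul_mem hh hvaH

end TransversalDecomposition

theorem Subgroup.Normal.fg_of_finiteIndex_sup_of_fg_inf {G : Type*} [Group G]
    {N A C : Subgroup G} [hN : N.Normal] {t : G} (hCA : C ≤ A)
    (hconj : ∀ c ∈ C, t * c * t⁻¹ ∈ A) (hgen : closure (insert t (A : Set G)) = ⊤)
    [(N ⊔ C).FiniteIndex] (hNA : (N ⊓ A).FG) : N.FG := by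
  have : (N ⊔ A).FiniteIndex := finiteIndex_of_le (sup_le_sup_left hCA N)
  obtain ⟨v, hv, hv1⟩ := QuotientGroup.exists_section_one_eq_one (N ⊔ A)
  choose e he heA using exists_mk_eq_section_mul (C := C) hv
  choose m hm hmdec using fun r => exists_eq_mul_section_mul A hv (e r * t⁻¹)
  set H := (⨆ q, (N ⊓ A).map (MulAut.conj (v q)).toMonoidHom) ⊔ closure (Set.range m)
  have hHN : H ≤ N := by
    refine sup_le (iSup_le fun q => ?_) ((closure_le N).2 (Set.range_subset_iff.2 hm))
    rintro _ ⟨x, hx, rfl⟩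
    exact hN.conj_mem x hx.1 (v q)
  have hH (q) (x) (hx : x ∈ N ⊓ A) : v q * x * (v q)⁻¹ ∈ H :=
    mem_sup_left (mem_iSup_of_mem q ⟨x, hx, rfl⟩)
  have het (r) : e r * t⁻¹ ∈ mulRangeMul H A v :=
    let ⟨a, ha, hdec⟩ := hmdec r
    ⟨m r, mem_sup_right (subset_closure ⟨r, rfl⟩), _, a, ha, hdec⟩
  have hW := mulRangeMul_eq_univ hv hv1 hH hHN hCA hconj hgen he heA het
  rw [le_antisymm (le_of_mulRangeMul_eq_univ hv hv1 hH hHN hW) hHN]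
  exact (FG.iSup _ fun q => hNA.map _).sup ((fg_iff _).2 ⟨_, rfl, Set.finite_range m⟩)

/-- Let `G = A∗_C` be an HNN extension with base group `A` and associated
subgroups `C` and `D`, and let `N` be a normal subgroup of `G`.  If the subgroup `N ⊔ C`
generated by `N` and `C` has finite index in `G` and `N ⊓ A` is finitely generated, then `N`
is finitely generated. -/
theorem stmt_7 {A : Type*} [Group A] (C D : Subgroup A) (φ : C ≃* D)
    (N : Subgroup (HNNExtension A C D φ)) (hNnorm : N.Normal)
    (hNCidx : (N ⊔ Subgroup.map (HNNExtension.of : A →* HNNExtension A C D φ) C).FiniteIndex)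
    (hNA : (N ⊓ (HNNExtension.of : A →* HNNExtension A C D φ).range).FG) :
    N.FG := by
  refine hNnorm.fg_of_finiteIndex_sup_of_fg_inf (t := HNNExtension.t)
    (C := C.map HNNExtension.of) ?_ ?_
    (HNNExtension.closure_insert_t_range_eq_top φ) hNA
  · rintro _ ⟨c, -, rfl⟩
    exact ⟨c, rfl⟩
  · rintro _ ⟨c, hc, rfl⟩
    exact ⟨φ ⟨c, hc⟩, HNNExtension.equiv_eq_conj ⟨c, hc⟩⟩
end

section
/- The one-relator group H = ⟨u, y | u y² u y⁻¹⟩ is an infinite cyclic extension of a free group of rank two, and the one-relator group G = ⟨x, y | x² y² x² y⁻¹⟩ is an infinite cyclic extension of a free group of rank four. -/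
/-- `G` is an infinite cyclic extension of a free group of rank `k`: there is a normal
subgroup `N` of `G` which is free of rank `k` with `G ⧸ N` infinite cyclic. -/
def IsInfCyclicExtOfFreeRank (G : Type*) [Group G] (k : ℕ) : Prop :=
  ∃ N : Subgroup G, ∃ hN : N.Normal,
    Nonempty (N ≃* FreeGroup (Fin k)) ∧
    Nonempty ((G ⧸ N) ≃* Multiplicative ℤ)

/-!
For `p = n + 1`, the group `⟨x, y | xᵖ y² xᵖ y⁻¹⟩` maps onto `ℤ` by `x ↦ 1`, `y ↦ -2p`, with kernel
free on `aᵢ = xⁱ (y x²ᵖ) x⁻ⁱ`, `0 ≤ i < 2p`. Conjugation by `x` shifts `aᵢ ↦ aᵢ₊₁`, and the relation,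
in the form `xᵖ y = y x⁻ᵖ y⁻¹`, gives `x a₂ₚ₋₁ x⁻¹ = x²ᵖ y = aₚ a₀⁻¹`. This shift `α` is an
automorphism of `F₂ₚ` (with `α⁻¹ a₀ = a₂ₚ₋₁⁻¹ aₚ₋₁`), and the group is `F₂ₚ ⋊_α ℤ`: the inverse
isomorphism sends `x ↦ t`, `y ↦ a₀ t⁻²ᵖ`, and kills the relator because `α^p a₀ = aₚ` and
`α^(-p) a₀ = aₚ⁻¹ a₀`.
-/

open SemidirectProduct Multiplicative

theorem isInfCyclicExtOfFreeRank_semidirectProduct {k : ℕ}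
    (φ : Multiplicative ℤ →* MulAut (FreeGroup (Fin k))) :
    IsInfCyclicExtOfFreeRank (FreeGroup (Fin k) ⋊[φ] Multiplicative ℤ) k :=
  ⟨rightHom.ker, inferInstance,
    ⟨((MonoidHom.ofInjective inl_injective).trans
      (MulEquiv.subgroupCongr range_inl_eq_ker_rightHom)).symm⟩,
    ⟨QuotientGroup.quotientKerEquivOfSurjective _ rightHom_surjective⟩⟩

theorem IsInfCyclicExtOfFreeRank.of_mulEquiv {G H : Type*} [Group G] [Group H] {k : ℕ}
    (e : G ≃* H) (h : IsInfCyclicExtOfFreeRank H k) : IsInfCyclicExtOfFreeRank G k := by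
  obtain ⟨N, _, ⟨eN⟩, ⟨eQ⟩⟩ := h
  have he : (N.comap e.toMonoidHom).map e.toMonoidHom = N :=
    Subgroup.map_comap_eq_self_of_surjective e.surjective N
  exact ⟨N.comap e.toMonoidHom, inferInstance,
    ⟨((e.subgroupMap _).trans (MulEquiv.subgroupCongr he)).trans eN⟩,
    ⟨(QuotientGroup.congr _ N e he).trans eQ⟩⟩

section
variable {N G : Type*} [Group N] [Group G]

theorem map_zpow_aut_apply_eq_conj {α : MulAut N} {f : N →* G} {t : G}
    (h : ∀ w, f (α w) = t * f w * t⁻¹) (j : ℤ) (w : N) :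
    f ((α ^ j) w) = t ^ j * f w * (t ^ j)⁻¹ := by
  induction j using Int.induction_on generalizing w with
  | zero => simp
  | succ k ih =>
    rw [zpow_add_one, MulAut.mul_apply, ih, h]
    group
  | pred k ih =>
    have h' : f (α⁻¹ w) = t⁻¹ * f w * t := by
      have := h (α⁻¹ w)
      rw [MulAut.apply_inv_self] at this
      rw [this]
      group
    rw [zpow_sub_one, MulAut.mul_apply, ih, h']
    group

def SemidirectProduct.liftZPowers (α : MulAut N) (f : N →* G) (t : G)
    (h : ∀ w, f (α w) = t * f w * t⁻¹) : N ⋊[zpowersHom _ α] Multiplicative ℤ →* G :=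
  lift f (zpowersHom G t) fun g => by
    ext w
    simp only [MonoidHom.comp_apply, MulEquiv.coe_toMonoidHom, zpowersHom_apply,
      MulAut.conj_apply, map_zpow_aut_apply_eq_conj h]

theorem SemidirectProduct.inr_ofAdd_one_zpow_conj (α : MulAut N) (j : ℤ) (w : N) :
    (inr (ofAdd 1) : N ⋊[zpowersHom _ α] Multiplicative ℤ) ^ j * inl w * (inr (ofAdd 1) ^ j)⁻¹
      = inl ((α ^ j) w) := by
  rw [← map_zpow, ← map_inv, ← inl_aut, zpowersHom_apply]
  simp

end

def OneRelatorGroup.relator (n : ℕ) : FreeGroup (Fin 2) :=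
  FreeGroup.of 0 ^ n * FreeGroup.of 1 ^ 2 * FreeGroup.of 0 ^ n * (FreeGroup.of 1)⁻¹

abbrev OneRelatorGroup (n : ℕ) : Type := PresentedGroup {OneRelatorGroup.relator n}

namespace OneRelatorGroup
variable (n : ℕ)

def x : OneRelatorGroup n := PresentedGroup.of 0
def y : OneRelatorGroup n := PresentedGroup.of 1

theorem x_pow_mul_y_sq_mul_x_pow : x n ^ n * y n ^ 2 * x n ^ n = y n :=
  mul_inv_eq_one.1 (PresentedGroup.one_of_mem (Set.mem_singleton (relator n)))

def shift : FreeGroup (Fin (2 * n + 2)) →* FreeGroup (Fin (2 * n + 2)) :=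
  FreeGroup.lift <| Fin.lastCases (FreeGroup.of ⟨n + 1, by omega⟩ * (FreeGroup.of 0)⁻¹)
    fun i => FreeGroup.of i.succ

def unshift : FreeGroup (Fin (2 * n + 2)) →* FreeGroup (Fin (2 * n + 2)) :=
  FreeGroup.lift <| Fin.cases ((FreeGroup.of (Fin.last _))⁻¹ * FreeGroup.of ⟨n, by omega⟩)
    fun i => FreeGroup.of i.castSucc

@[simp] theorem shift_of_castSucc (i : Fin (2 * n + 1)) :
    shift n (FreeGroup.of i.castSucc) = FreeGroup.of i.succ := by
  simp [shift]

@[simp] theorem shift_of_last :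
    shift n (FreeGroup.of (Fin.last _)) = FreeGroup.of ⟨n + 1, by omega⟩ * (FreeGroup.of 0)⁻¹ := by
  simp [shift]

@[simp] theorem unshift_of_zero :
    unshift n (FreeGroup.of 0) = (FreeGroup.of (Fin.last _))⁻¹ * FreeGroup.of ⟨n, by omega⟩ := by
  simp [unshift]

@[simp] theorem unshift_of_succ (i : Fin (2 * n + 1)) :
    unshift n (FreeGroup.of i.succ) = FreeGroup.of i.castSucc := by
  simp [unshift]

theorem unshift_comp_shift : (unshift n).comp (shift n) = MonoidHom.id _ := by
  refine FreeGroup.ext_hom _ _ fun i => ?_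
  induction i using Fin.lastCases with
  | last =>
    have : (⟨n + 1, by omega⟩ : Fin (2 * n + 2)) = Fin.succ ⟨n, by omega⟩ := rfl
    simp only [MonoidHom.comp_apply, MonoidHom.id_apply, shift_of_last, map_mul, map_inv, this,
      unshift_of_succ, unshift_of_zero, Fin.castSucc_mk]
    group
  | cast i => simp

theorem shift_comp_unshift : (shift n).comp (unshift n) = MonoidHom.id _ := by
  refine FreeGroup.ext_hom _ _ fun i => ?_
  induction i using Fin.cases with
  | zero =>
    have : (⟨n, by omega⟩ : Fin (2 * n + 2)) = Fin.castSucc ⟨n, by omega⟩ := rfl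
    simp only [MonoidHom.comp_apply, MonoidHom.id_apply, unshift_of_zero, map_mul, map_inv, this,
      shift_of_castSucc, shift_of_last, Fin.succ_mk]
    group
  | succ i => simp

def shiftAut : MulAut (FreeGroup (Fin (2 * n + 2))) :=
  MonoidHom.toMulEquiv (shift n) (unshift n) (unshift_comp_shift n) (shift_comp_unshift n)

@[simp] theorem shiftAut_apply (w : FreeGroup (Fin (2 * n + 2))) : shiftAut n w = shift n w := rfl

theorem shiftAut_pow_apply_of_zero (i : Fin (2 * n + 2)) :
    (shiftAut n ^ (i : ℕ)) (FreeGroup.of 0) = FreeGroup.of i := by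
  induction i using Fin.induction with
  | zero => simp
  | succ i ih => rw [Fin.val_succ, pow_succ', MulAut.mul_apply, ← Fin.val_castSucc, ih]; simp

theorem shiftAut_pow_succ_apply_of_zero :
    (shiftAut n ^ (n + 1)) (FreeGroup.of 0) = FreeGroup.of ⟨n + 1, by omega⟩ :=
  shiftAut_pow_apply_of_zero n ⟨n + 1, by omega⟩

theorem shiftAut_zpow_neg_succ_apply_of_zero :
    (shiftAut n ^ (-(n + 1 : ℤ))) (FreeGroup.of 0) =
      (FreeGroup.of ⟨n + 1, by omega⟩)⁻¹ * FreeGroup.of 0 := by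
  have h : (shiftAut n ^ (n + 1)) ((shiftAut n ^ (n + 1)) (FreeGroup.of 0)) =
      (shiftAut n ^ (n + 1)) (FreeGroup.of 0) * (FreeGroup.of 0)⁻¹ := by
    rw [← MulAut.mul_apply, ← pow_add,
      show n + 1 + (n + 1) = (Fin.last (2 * n + 1) : ℕ) + 1 by simp; omega, pow_succ',
      MulAut.mul_apply, shiftAut_pow_apply_of_zero, shiftAut_apply, shift_of_last,
      shiftAut_pow_succ_apply_of_zero]
  rw [zpow_neg, ← Nat.cast_add_one, zpow_natCast, MulAut.inv_apply, MulEquiv.symm_apply_eq,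
    map_mul, map_inv, ← shiftAut_pow_succ_apply_of_zero, h]
  group

theorem x_pow_mul_y : x n ^ n * y n = y n * (x n ^ n)⁻¹ * (y n)⁻¹ :=
  calc x n ^ n * y n = x n ^ n * y n ^ 2 * x n ^ n * ((x n ^ n)⁻¹ * (y n)⁻¹) := by group
    _ = _ := by rw [x_pow_mul_y_sq_mul_x_pow]; group

def kernelGen (i : Fin (2 * n + 2)) : OneRelatorGroup (n + 1) :=
  x _ ^ (i : ℕ) * (y _ * x _ ^ (2 * n + 2)) * (x _ ^ (i : ℕ))⁻¹

def ofFreeGroup : FreeGroup (Fin (2 * n + 2)) →* OneRelatorGroup (n + 1) :=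
  FreeGroup.lift (kernelGen n)

theorem ofFreeGroup_shiftAut (w : FreeGroup (Fin (2 * n + 2))) :
    ofFreeGroup n (shiftAut n w) = x _ * ofFreeGroup n w * (x _)⁻¹ := by
  suffices (ofFreeGroup n).comp (shift n) = (MulAut.conj (x _)).toMonoidHom.comp (ofFreeGroup n)
    from DFunLike.congr_fun this w
  refine FreeGroup.ext_hom _ _ fun i => ?_
  induction i using Fin.lastCases with
  | last =>
    simp only [MonoidHom.comp_apply, shift_of_last, map_mul, map_inv, ofFreeGroup,
      FreeGroup.lift_apply_of, kernelGen, MulEquiv.coe_toMonoidHom, MulAut.conj_apply,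
      Fin.val_last, Fin.val_zero, pow_zero]
    calc _ = x _ ^ (n + 1) * (y _ * (x _ ^ (n + 1))⁻¹ * (y _)⁻¹) := by group
      _ = x _ ^ (n + 1) * (x _ ^ (n + 1) * y _) := by rw [x_pow_mul_y]
      _ = _ := by group
  | cast i =>
    simp only [MonoidHom.comp_apply, shift_of_castSucc, ofFreeGroup, FreeGroup.lift_apply_of,
      kernelGen, Fin.val_succ, Fin.val_castSucc, MulEquiv.coe_toMonoidHom, MulAut.conj_apply]
    group

abbrev FreeByCyclic : Type :=
  FreeGroup (Fin (2 * n + 2)) ⋊[zpowersHom _ (shiftAut n)] Multiplicative ℤ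

def ofFreeByCyclic : FreeByCyclic n →* OneRelatorGroup (n + 1) :=
  liftZPowers (shiftAut n) (ofFreeGroup n) (x _) (ofFreeGroup_shiftAut n)

theorem lift_relator_eq_one : ∀ r ∈ ({relator (n + 1)} : Set (FreeGroup (Fin 2))),
    FreeGroup.lift ![(inr (ofAdd 1) : FreeByCyclic n),
      inl (FreeGroup.of 0) * (inr (ofAdd 1) ^ (2 * n + 2))⁻¹] r = 1 := by
  rintro r rfl
  simp only [relator, map_mul, map_pow, map_inv, FreeGroup.lift_apply_of, Matrix.cons_val_zero,
    Matrix.cons_val_one, sq]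
  set t : FreeByCyclic n := inr (ofAdd 1)
  calc _ = (t ^ (n + 1 : ℤ) * inl (FreeGroup.of 0) * (t ^ (n + 1 : ℤ))⁻¹) *
        (t ^ (-(n + 1 : ℤ)) * inl (FreeGroup.of 0) * (t ^ (-(n + 1 : ℤ)))⁻¹) *
        (inl (FreeGroup.of 0))⁻¹ := by group
    _ = 1 := by
      rw [inr_ofAdd_one_zpow_conj, inr_ofAdd_one_zpow_conj, ← map_inv, ← map_mul, ← map_mul,
        shiftAut_zpow_neg_succ_apply_of_zero, ← Nat.cast_add_one, zpow_natCast,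
        shiftAut_pow_succ_apply_of_zero]
      simp

def toFreeByCyclic : OneRelatorGroup (n + 1) →* FreeByCyclic n :=
  PresentedGroup.toGroup (lift_relator_eq_one n)

theorem toFreeByCyclic_x : toFreeByCyclic n (x _) = inr (ofAdd 1) :=
  PresentedGroup.toGroup.of _

theorem toFreeByCyclic_y :
    toFreeByCyclic n (y _) = inl (FreeGroup.of 0) * (inr (ofAdd 1) ^ (2 * n + 2))⁻¹ :=
  PresentedGroup.toGroup.of _

theorem toFreeByCyclic_y_mul_x_pow :
    toFreeByCyclic n (y _ * x _ ^ (2 * n + 2)) = inl (FreeGroup.of 0) := by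
  rw [map_mul, map_pow, toFreeByCyclic_x, toFreeByCyclic_y, inv_mul_cancel_right]

theorem ofFreeByCyclic_comp_toFreeByCyclic :
    (ofFreeByCyclic n).comp (toFreeByCyclic n) = MonoidHom.id _ := by
  refine PresentedGroup.ext fun i => ?_
  fin_cases i
  · show ofFreeByCyclic n (toFreeByCyclic n (x _)) = x _
    simp [toFreeByCyclic_x, ofFreeByCyclic, liftZPowers]
  · show ofFreeByCyclic n (toFreeByCyclic n (y _)) = y _
    simp [toFreeByCyclic_y, ofFreeByCyclic, liftZPowers, ofFreeGroup, kernelGen]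

theorem toFreeByCyclic_comp_ofFreeByCyclic :
    (toFreeByCyclic n).comp (ofFreeByCyclic n) = MonoidHom.id _ := by
  refine hom_ext (FreeGroup.ext_hom _ _ fun i => ?_) (MonoidHom.ext_mint ?_)
  · simp only [MonoidHom.comp_apply, ofFreeByCyclic, liftZPowers, lift_inl, ofFreeGroup,
      FreeGroup.lift_apply_of, kernelGen, MonoidHom.id_apply]
    rw [map_mul, map_mul, toFreeByCyclic_y_mul_x_pow, map_inv, map_pow, toFreeByCyclic_x,
      ← zpow_natCast, inr_ofAdd_one_zpow_conj, zpow_natCast, shiftAut_pow_apply_of_zero]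
  · simp [ofFreeByCyclic, liftZPowers, toFreeByCyclic_x]

def mulEquivFreeByCyclic : OneRelatorGroup (n + 1) ≃* FreeByCyclic n :=
  MonoidHom.toMulEquiv _ _ (ofFreeByCyclic_comp_toFreeByCyclic n)
    (toFreeByCyclic_comp_ofFreeByCyclic n)

theorem isInfCyclicExtOfFreeRank :
    IsInfCyclicExtOfFreeRank (OneRelatorGroup (n + 1)) (2 * n + 2) :=
  (isInfCyclicExtOfFreeRank_semidirectProduct _).of_mulEquiv (mulEquivFreeByCyclic n)

end OneRelatorGroup

/-- The one-relator group `H = ⟨u, y | u y² u y⁻¹⟩` is an infinite cyclic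
extension of a free group of rank two, and the one-relator group `G = ⟨x, y | x² y² x² y⁻¹⟩`
is an infinite cyclic extension of a free group of rank four.  (Generators: `0` is `u`
resp. `x`, and `1` is `y`.) -/
theorem stmt_19 :
    IsInfCyclicExtOfFreeRank
      (PresentedGroup ({FreeGroup.of 0 * FreeGroup.of 1 ^ 2 * FreeGroup.of 0 *
        (FreeGroup.of 1)⁻¹} : Set (FreeGroup (Fin 2)))) 2 ∧
    IsInfCyclicExtOfFreeRank
      (PresentedGroup ({FreeGroup.of 0 ^ 2 * FreeGroup.of 1 ^ 2 * FreeGroup.of 0 ^ 2 *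
        (FreeGroup.of 1)⁻¹} : Set (FreeGroup (Fin 2)))) 4 := by
  refine ⟨?_, OneRelatorGroup.isInfCyclicExtOfFreeRank 1⟩
  have h := OneRelatorGroup.isInfCyclicExtOfFreeRank 0
  unfold OneRelatorGroup OneRelatorGroup.relator at h
  rwa [zero_add, pow_one] at h
end
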